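/- arXiv:1708.05796 — 2 statements merged into one kernel-verified Lean document; each statement's English description precedes it below -/
import Mathlib

section
/- The commutator of the orthogonal projection onto a box subspace with a coordinate Toeplitz operator is compact: for every box ℬ^{𝔟}_{𝔧} ⊆ ℕ^m and every s ∈ {1,…,m}, the commutator [P^{𝔟}_{𝔧}, T_{z_s}] is a compact operator on L²_a(𝔹^m). -/
/-!
In the monomial basis `e_𝔫`, the commutator `[P, T_{z_s}]` sends `e_𝔫` to `d_𝔫 e_{𝔫+e_s}`, where
`d_𝔫 = (𝟙_ℬ(𝔫+e_s) - 𝟙_ℬ(𝔫)) √(ω₀(𝔫+e_s)/ω₀(𝔫))`. Since the box is downward closed, `d_𝔫 ≠ 0`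
forces `n_s = b_s`, and then `|d_𝔫|² = (b_s+1)/(|𝔫|+m+1)`, which tends to `0` off finite sets.
An operator sending an orthonormal basis to a null sequence of multiples of an orthonormal family
is the norm limit of its finite-rank truncations, hence compact.
-/

open scoped ENNReal

noncomputable section

/-- The box `ℬ^𝔟_𝔧 ⊆ ℕ^m`. -/
def Box (m : ℕ) (J : Finset (Fin m)) (b : Fin m → ℕ) : Set (Fin m → ℕ) :=
  {n | ∀ j ∈ J, n j ≤ b j}

/-- The Bergman space weight `ω₀(𝔫) = (∏ᵢ nᵢ!)·m!/(|𝔫|+m)!`. -/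
def omega0 (m : ℕ) (n : Fin m → ℕ) : ℝ :=
  ((∏ i, (n i).factorial) * m.factorial : ℕ) / (((∑ i, n i) + m).factorial : ℕ)

/-- `𝔫 + e_p`. -/
def bump (m : ℕ) (p : Fin m) (n : Fin m → ℕ) : Fin m → ℕ :=
  Function.update n p (n p + 1)

/-- The Bergman space `L²_a(𝔹^m)` in coordinates with respect to its orthonormal basis of
normalized monomials `z^𝔫/√ω₀(𝔫)`, `𝔫 ∈ ℕ^m`. -/
abbrev Berg (m : ℕ) := lp (fun _ : (Fin m → ℕ) => ℂ) (2 : ℝ≥0∞)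

open Filter Topology

lemma ContinuousLinearMap.isCompactOperator_smulRight {𝕜 E F : Type*} [NontriviallyNormedField 𝕜]
    [LocallyCompactSpace 𝕜] [AddCommGroup E] [TopologicalSpace E] [Module 𝕜 E] [AddCommGroup F]
    [TopologicalSpace F] [Module 𝕜 F] [ContinuousSMul 𝕜 F] (f : E →L[𝕜] 𝕜) (u : F) :
    IsCompactOperator (f.smulRight u) :=
  (isCompactOperator_of_locallyCompactSpace_dom f).continuous_comp
    (continuous_id.smul continuous_const)

section NullWeightedShift

variable {𝕜 ι E F : Type*} [RCLike 𝕜] [NormedAddCommGroup E] [InnerProductSpace 𝕜 E]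
  [NormedAddCommGroup F] [InnerProductSpace 𝕜 F]

local notation "⟪" x ", " y "⟫" => inner 𝕜 x y

lemma Orthonormal.norm_le_of_hasSum {b : ι → E} {w : ι → F} (hb : Orthonormal 𝕜 b)
    (hw : Orthonormal 𝕜 w) {a : ι → 𝕜} {x : E} {y : F} {ε : ℝ} (hε : 0 ≤ ε)
    (hy : HasSum (fun i => a i • w i) y) (ha : ∀ i, ‖a i‖ ≤ ε * ‖⟪b i, x⟫‖) :
    ‖y‖ ≤ ε * ‖x‖ := by
  refine le_of_tendsto' hy.norm fun t => ?_
  refine (pow_le_pow_iff_left₀ (norm_nonneg _) (by positivity) two_ne_zero).mp ?_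
  calc ‖∑ i ∈ t, a i • w i‖ ^ 2 = ∑ i ∈ t, ‖a i‖ ^ 2 := by
        simpa using hw.orthogonalFamily.norm_sum a t
    _ ≤ ∑ i ∈ t, ε ^ 2 * ‖⟪b i, x⟫‖ ^ 2 := Finset.sum_le_sum fun i _ => by
        rw [← mul_pow]; gcongr; exact ha i
    _ ≤ ε ^ 2 * ‖x‖ ^ 2 := by
        rw [← Finset.mul_sum]; gcongr; exact hb.sum_inner_products_le x
    _ = (ε * ‖x‖) ^ 2 := by ring

variable (b : HilbertBasis ι 𝕜 E) {w : ι → F} {d : ι → 𝕜} {D : E →L[𝕜] F}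

lemma HilbertBasis.norm_sub_sum_smulRight_le (hw : Orthonormal 𝕜 w)
    (hD : ∀ i, D (b i) = d i • w i) {s : Finset ι} {ε : ℝ} (hε : 0 ≤ ε)
    (hs : ∀ i ∉ s, ‖d i‖ ≤ ε) :
    ‖D - ∑ i ∈ s, (innerSL 𝕜 (b i)).smulRight (D (b i))‖ ≤ ε := by
  classical
  refine ContinuousLinearMap.opNorm_le_bound _ hε fun x => ?_
  have hDx : HasSum (fun i => ⟪b i, x⟫ • D (b i)) (D x) := by
    simpa [b.repr_apply_apply] using (b.hasSum_repr x).mapL D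
  have hsx : HasSum (fun i => if i ∈ s then ⟪b i, x⟫ • D (b i) else 0)
      (∑ i ∈ s, ⟪b i, x⟫ • D (b i)) := by
    simpa [Finset.sum_ite_mem] using hasSum_sum_of_ne_finset_zero fun i (hi : i ∉ s) => if_neg hi
  refine b.orthonormal.norm_le_of_hasSum hw hε
    (a := fun i => if i ∈ s then 0 else ⟪b i, x⟫ * d i) ?_ fun i => ?_
  · convert hDx.sub hsx using 1
    · funext i; split_ifs <;> simp [hD, mul_smul]
    · simp
  · split_ifs with hi
    · rw [norm_zero]; positivity
    · rw [norm_mul, mul_comm]; gcongr; exact hs i hi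

theorem HilbertBasis.isCompactOperator_of_apply_eq_smul [CompleteSpace F]
    (hw : Orthonormal 𝕜 w) (hD : ∀ i, D (b i) = d i • w i) (hd : Tendsto d cofinite (𝓝 0)) :
    IsCompactOperator D := by
  refine isCompactOperator_of_tendsto (l := atTop)
    (F := fun s => ∑ i ∈ s, (innerSL 𝕜 (b i)).smulRight (D (b i))) ?_
    (Eventually.of_forall fun s => ?_)
  · refine Metric.tendsto_nhds.mpr fun ε hε => ?_
    have hfin : {i | ¬ ‖d i‖ ≤ ε / 2}.Finite :=
      eventually_cofinite.mp (hd.norm.eventually (ge_mem_nhds (by simpa using half_pos hε)))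
    filter_upwards [eventually_ge_atTop hfin.toFinset] with s hs
    rw [dist_comm, dist_eq_norm]
    refine (b.norm_sub_sum_smulRight_le hw hD (by positivity) fun i hi => ?_).trans_lt
      (half_lt_self hε)
    by_contra h
    exact hi (hs (hfin.mem_toFinset.mpr h))
  · exact Submodule.sum_mem (compactOperator _ E F) fun i _ =>
      (innerSL 𝕜 (b i)).isCompactOperator_smulRight _

end NullWeightedShift

lemma bump_injective (m : ℕ) (s : Fin m) : Function.Injective (bump m s) := by
  intro n n' h
  funext i
  have hi := congrFun h i
  by_cases his : i = s
  · subst his; simpa [bump] using hi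
  · simpa [bump, his] using hi

lemma prod_factorial_bump (m : ℕ) (s : Fin m) (n : Fin m → ℕ) :
    ∏ i, (bump m s n i).factorial = (n s + 1) * ∏ i, (n i).factorial := by
  have h : (fun i => (bump m s n i).factorial) =
      Function.update (fun i => (n i).factorial) s (n s + 1).factorial := by
    funext i
    by_cases his : i = s
    · subst his; simp [bump]
    · simp [bump, his]
  rw [h, Finset.prod_update_of_mem (Finset.mem_univ s), Nat.factorial_succ, mul_assoc,
    ← Finset.mul_prod_erase Finset.univ _ (Finset.mem_univ s), Finset.sdiff_singleton_eq_erase]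

lemma sum_bump (m : ℕ) (s : Fin m) (n : Fin m → ℕ) :
    ∑ i, bump m s n i = (∑ i, n i) + 1 := by
  rw [bump, Finset.sum_update_of_mem (Finset.mem_univ s),
    ← Finset.add_sum_erase Finset.univ n (Finset.mem_univ s), Finset.sdiff_singleton_eq_erase]
  ring

lemma omega0_bump_div (m : ℕ) (s : Fin m) (n : Fin m → ℕ) :
    omega0 m (bump m s n) / omega0 m n = (n s + 1 : ℝ) / ((∑ i, n i) + m + 1) := by
  rw [omega0, omega0, prod_factorial_bump, sum_bump, add_right_comm, Nat.factorial_succ]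
  have : (((∑ i, n i) + m).factorial : ℝ) ≠ 0 := by positivity
  have : ((∏ i, (n i).factorial) * m.factorial : ℝ) ≠ 0 := by positivity
  push_cast
  field_simp

lemma tendsto_sum_cofinite_atTop (ι : Type*) [Fintype ι] :
    Tendsto (fun n : ι → ℕ => ∑ i, n i) cofinite atTop := by
  refine tendsto_atTop.mpr fun N => eventually_cofinite.mpr ?_
  refine (Set.Finite.pi (t := fun _ => Set.Iio N) fun _ => Set.finite_Iio N).subset
    fun n hn i _ => ?_
  exact (Finset.single_le_sum (fun j _ => Nat.zero_le (n j)) (Finset.mem_univ i)).trans_lt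
    (not_le.mp hn)

section Box

variable {m : ℕ} {J : Finset (Fin m)} {b : Fin m → ℕ} {s : Fin m} {n : Fin m → ℕ}

lemma mem_box_of_bump_mem (h : bump m s n ∈ Box m J b) : n ∈ Box m J b := by
  intro j hj
  refine le_trans ?_ (h j hj)
  by_cases hjs : j = s
  · subst hjs; simp [bump]
  · simp [bump, hjs]

lemma eq_of_mem_box_of_bump_notMem (hn : n ∈ Box m J b) (h : bump m s n ∉ Box m J b) :
    n s = b s := by
  obtain ⟨j, hj, hlt⟩ : ∃ j ∈ J, b j < bump m s n j := by simpa [Box] using h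
  by_cases hjs : j = s
  · subst hjs; simp only [bump, Function.update_self] at hlt; linarith [hn j hj]
  · simp only [bump, Function.update_of_ne hjs] at hlt; linarith [hn j hj]

end Box

def commutatorWeight (m : ℕ) (J : Finset (Fin m)) (b : Fin m → ℕ) (s : Fin m)
    (n : Fin m → ℕ) : ℂ :=
  ((Box m J b).indicator 1 (bump m s n) - (Box m J b).indicator 1 n) *
    Real.sqrt (omega0 m (bump m s n) / omega0 m n)

lemma norm_commutatorWeight_le (m : ℕ) (J : Finset (Fin m)) (b : Fin m → ℕ) (s : Fin m)
    (n : Fin m → ℕ) :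
    ‖commutatorWeight m J b s n‖ ≤ Real.sqrt ((b s + 1) / ((∑ i, n i : ℕ) + m + 1)) := by
  by_cases h : bump m s n ∈ Box m J b ↔ n ∈ Box m J b
  · have : (Box m J b).indicator (1 : (Fin m → ℕ) → ℂ) (bump m s n) =
        (Box m J b).indicator 1 n := by
      classical
      simp only [Set.indicator_apply, h, Pi.one_apply]
    simp [commutatorWeight, this]
  · have hn : n ∈ Box m J b := by have := @mem_box_of_bump_mem m J b s n; tauto
    have hbump : bump m s n ∉ Box m J b := by tauto
    rw [commutatorWeight, Set.indicator_of_notMem hbump, Set.indicator_of_mem hn,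
      omega0_bump_div, ← eq_of_mem_box_of_bump_notMem hn hbump]
    simp [abs_of_nonneg]

lemma tendsto_commutatorWeight (m : ℕ) (J : Finset (Fin m)) (b : Fin m → ℕ) (s : Fin m) :
    Tendsto (commutatorWeight m J b s) cofinite (𝓝 0) := by
  refine squeeze_zero_norm (norm_commutatorWeight_le m J b s) ?_
  have : Tendsto (fun k : ℕ => Real.sqrt ((b s + 1) / ((k : ℝ) + m + 1))) atTop (𝓝 0) := by
    simpa using (tendsto_const_nhds.div_atTop <| tendsto_atTop_add_const_right _ _ <|
      tendsto_atTop_add_const_right _ _ tendsto_natCast_atTop_atTop).sqrt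
  exact this.comp (tendsto_sum_cofinite_atTop _)

open scoped Classical in
lemma commutator_apply_single {m : ℕ} {J : Finset (Fin m)} {b : Fin m → ℕ} {s : Fin m}
    {T P : Berg m →L[ℂ] Berg m}
    (hT : ∀ n : Fin m → ℕ,
      T (lp.single 2 n 1) =
        (Real.sqrt (omega0 m (bump m s n) / omega0 m n) : ℂ) • lp.single 2 (bump m s n) 1)
    (hP : ∀ n : Fin m → ℕ,
      P (lp.single 2 n 1) = if n ∈ Box m J b then lp.single 2 n 1 else 0)
    (n : Fin m → ℕ) :
    (P ∘L T - T ∘L P) (lp.single 2 n 1) =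
      commutatorWeight m J b s n • lp.single 2 (bump m s n) 1 := by
  simp only [sub_apply, ContinuousLinearMap.comp_apply, hT, map_smul, hP,
    commutatorWeight, Set.indicator_apply]
  split_ifs <;> simp [hT]

open scoped Classical in
/-- for the multiplication operator `T = T_{z_s}` on `L²_a(𝔹^m)` and the
orthogonal projection `P = P^𝔟_𝔧` onto the span of the monomials indexed by the box
`ℬ^𝔟_𝔧`, the commutator `[P, T_{z_s}]` is compact. -/
theorem proj_mult_commutator_compact (m : ℕ) (J : Finset (Fin m)) (b : Fin m → ℕ)
    (s : Fin m) (T P : Berg m →L[ℂ] Berg m)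
    (hT : ∀ n : Fin m → ℕ,
      T (lp.single 2 n 1) =
        (Real.sqrt (omega0 m (bump m s n) / omega0 m n) : ℂ) • lp.single 2 (bump m s n) 1)
    (hP : ∀ n : Fin m → ℕ,
      P (lp.single 2 n 1) = if n ∈ Box m J b then lp.single 2 n 1 else 0) :
    IsCompactOperator ⇑(P ∘L T - T ∘L P) := by
  let e : HilbertBasis (Fin m → ℕ) ℂ (Berg m) := .ofRepr (.refl ℂ _)
  have he : ∀ n, e n = lp.single 2 n 1 := fun n => (e.repr_symm_single n).symm
  exact e.isCompactOperator_of_apply_eq_smul (e.orthonormal.comp _ (bump_injective m s))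
    (fun n => by simpa only [he, Function.comp_apply] using commutator_apply_single hT hP n)
    (tendsto_commutatorWeight m J b s)
end
end

section
/- The L²-closure of a monomial ideal equals the kernel of the restriction map Ψ₀: let I = ⟨z^{α₁},…,z^{α_l}⟩ be a monomial ideal and let ℬ₁,…,ℬ_k be the boxes whose union is the set of exponents of monomials not in I. Then the closure Ī of I in the Bergman space L²_a(𝔹^m) equals {f ∈ L²_a(𝔹^m) : the monomial coefficient f_𝔫 = 0 for every 𝔫 ∈ ℬ₁ ∪ ⋯ ∪ ℬ_k}. -/
open scoped ENNReal

noncomputable section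

open scoped InnerProductSpace

lemma berg_inner_single (m : ℕ) (n : Fin m → ℕ) (f : Berg m) :
    ⟪lp.single 2 n (1 : ℂ), f⟫_ℂ = f n := by
  classical
  rw [lp.inner_single_left]
  simp [RCLike.inner_apply]

lemma box_union_iff (m l : ℕ) (α : Fin l → Fin m → ℕ) (n : Fin m → ℕ) :
    (n ∈ ⋃ s : Fin l → Fin m, {n : Fin m → ℕ | ∀ i, n (s i) < α i (s i)}) ↔
      ¬ ∃ i, α i ≤ n := by
  simp only [Set.mem_iUnion, Set.mem_setOf_eq]
  constructor
  · rintro ⟨s, hs⟩ ⟨i, hi⟩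
    exact absurd (hi (s i)) (not_le.2 (hs i))
  · intro h
    have h' : ∀ i, ∃ k, n k < α i k := by
      intro i
      by_contra hk
      push_neg at hk
      exact h ⟨i, fun k => hk k⟩
    exact Classical.skolem.mp h'

/-- for the monomial ideal `I = ⟨z^{α₁},…,z^{α_l}⟩` (whose underlying
vector space is spanned by the monomials `z^𝔫` with `α_i ≤ 𝔫` for some `i`), the closure
of `I` in `L²_a(𝔹^m)` is exactly the set of `f` whose monomial coefficients vanish on the
union of the boxes `ℬ₁ ∪ ⋯ ∪ ℬ_k` (the boxes `{𝔫 : ∀ i, 𝔫_{s_i} < α_i^{s_i}}` over all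
choices `𝔰`, whose union is the complement of the exponent set of `I`). -/
theorem closure_monomial_ideal_eq (m l : ℕ) (α : Fin l → Fin m → ℕ) :
    closure
        ((Submodule.span ℂ
            {x : Berg m | ∃ n : Fin m → ℕ, (∃ i, α i ≤ n) ∧ x = lp.single 2 n 1} :
          Submodule ℂ (Berg m)) : Set (Berg m)) =
      {f : Berg m | ∀ n : Fin m → ℕ,
        n ∈ (⋃ s : Fin l → Fin m, {n : Fin m → ℕ | ∀ i, n (s i) < α i (s i)}) → f n = 0} := by
  classical
  set K : Submodule ℂ (Berg m) := Submodule.span ℂ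
    {x : Berg m | ∃ n : Fin m → ℕ, (∃ i, α i ≤ n) ∧ x = lp.single 2 n 1}
  -- characterize Kᗮ
  have hKo : ∀ f : Berg m, f ∈ Kᗮ ↔ ∀ n : Fin m → ℕ, (∃ i, α i ≤ n) → f n = 0 := by
    intro f
    rw [Submodule.mem_orthogonal]
    constructor
    · intro hf n hn
      have := hf (lp.single 2 n 1) (Submodule.subset_span ⟨n, hn, rfl⟩)
      rwa [berg_inner_single] at this
    · intro hf u hu
      induction hu using Submodule.span_induction with
      | mem x hx =>
          obtain ⟨n, hn, rfl⟩ := hx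
          rw [berg_inner_single]; exact hf n hn
      | zero => simp
      | add x y _ _ hx hy => rw [inner_add_left, hx, hy, add_zero]
      | smul c x _ hx => rw [inner_smul_left, hx, mul_zero]
  have hclos : closure (K : Set (Berg m)) = (Kᗮᗮ : Set (Berg m)) := by
    rw [K.orthogonal_orthogonal_eq_closure, Submodule.topologicalClosure_coe]
  rw [hclos]
  ext f
  simp only [SetLike.mem_coe, Set.mem_setOf_eq]
  constructor
  · intro hf n hn
    rw [box_union_iff] at hn
    have hs : lp.single 2 n (1 : ℂ) ∈ Kᗮ := by
      rw [hKo]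
      intro n' hn'
      rw [lp.single_apply]
      have : n' ≠ n := fun h => hn (h ▸ hn')
      simp [this]
    have := (Submodule.mem_orthogonal _ f).mp hf _ hs
    rwa [berg_inner_single] at this
  · intro hf
    rw [Submodule.mem_orthogonal]
    intro g hg
    rw [hKo] at hg
    rw [lp.inner_eq_tsum]
    convert tsum_zero with n
    by_cases hn : ∃ i, α i ≤ n
    · rw [hg n hn]; simp
    · rw [hf n ((box_union_iff m l α n).mpr hn)]; simp
end
end
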